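/- Let n be a positive integer and let P ⊆ {x ∈ ℝⁿ : ∀i, xᵢ ≥ 0} be a nonempty rational H-polyhedron such that P + ℝⁿ_{≥0} ⊆ P, and let h : ℝⁿ → ℝ be a function that is convex on P and decreasing in each variable on P (if x, y ∈ P with xᵢ ≤ yᵢ for all i, then h(y) ≤ h(x)). Then the following are equivalent: (1) the epigraph epi(h) = {(x,t) ∈ ℝⁿ × ℝ : x ∈ P and t ≥ h(x)} is a rational H-polyhedron in ℝⁿ × ℝ; (2) there exist finitely many vectors t₁, …, t_N ∈ ℚⁿ with all components nonpositive and rational numbers b₁, …, b_N such that h(x) = max_{1≤i≤N} (⟨tᵢ,x⟩ + bᵢ) for all x ∈ P. -/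

import Mathlib

/-!
A half-space `⟨a, x⟩ + s t ≤ b` containing the epigraph of `h` over a nonempty `P` has `s ≤ 0`.
Those with `s = 0` only constrain `x`, while those with `s < 0` say `t ≥ ℓ(x) := (b - ⟨a, x⟩) / s`
for a rational affine `ℓ`, so `h` is the maximum of these `ℓ` on `P`. Each `ℓ` lies below `h`,
and `h` is bounded above along every ray `x₀ + λ eᵢ`, which stays in `P`; hence the slopes of `ℓ`
are nonpositive. Conversely, the epigraph of a finite maximum of rational affine functions over `P`
is cut out by the inequalities of `P` together with `t ≥ ℓₖ(x)`.
-/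

open Pointwise

/-- A rational H-polyhedron in `ℝⁿ`: a finite intersection of closed half-spaces
`{x : ⟨a,x⟩ ≤ b}` with rational normal vectors `a` and rational constants `b`. -/
def IsRatHPolyhedron (n : ℕ) (Q : Set (Fin n → ℝ)) : Prop :=
  ∃ (N : ℕ) (a : Fin N → Fin n → ℚ) (b : Fin N → ℚ),
    Q = ⋂ k : Fin N, {x : Fin n → ℝ | ∑ i, (a k i : ℝ) * x i ≤ (b k : ℝ)}

/-- A rational H-polyhedron in `ℝⁿ × ℝ`: a finite intersection of closed half-spaces
`{(x,t) : ⟨a,x⟩ + s·t ≤ b}` with `a ∈ ℚⁿ` and `s, b ∈ ℚ`. -/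
def IsRatHPolyhedronProd (n : ℕ) (S : Set ((Fin n → ℝ) × ℝ)) : Prop :=
  ∃ (N : ℕ) (a : Fin N → Fin n → ℚ) (s : Fin N → ℚ) (b : Fin N → ℚ),
    S = ⋂ k : Fin N, {p : (Fin n → ℝ) × ℝ |
      (∑ i, (a k i : ℝ) * p.1 i) + (s k : ℝ) * p.2 ≤ (b k : ℝ)}

def ratAffine {n : ℕ} (t : Fin n → ℚ) (b : ℚ) (x : Fin n → ℝ) : ℝ :=
  ∑ i, (t i : ℝ) * x i + b

lemma ratAffine_neg_div {n : ℕ} (a : Fin n → ℚ) (b s : ℚ) (x : Fin n → ℝ) :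
    ratAffine (fun i => -a i / s) (b / s) x = (b - ∑ i, (a i : ℝ) * x i) / s := by
  simp only [ratAffine, Rat.cast_div, Rat.cast_neg, sub_div, Finset.sum_div]
  simp only [neg_div, neg_mul, Finset.sum_neg_distrib, mul_div_right_comm]
  ring

lemma nonpos_of_forall_ge_mul_le {c M t₀ : ℝ} (h : ∀ t ≥ t₀, c * t ≤ M) : c ≤ 0 := by
  by_contra! hc
  have hbound : M + 1 ≤ c * max t₀ ((M + 1) / c) :=
    calc M + 1 = c * ((M + 1) / c) := by field_simp
      _ ≤ c * max t₀ ((M + 1) / c) := mul_le_mul_of_nonneg_left (le_max_right _ _) hc.le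
  linarith [h _ (le_max_left t₀ ((M + 1) / c))]

section

variable {E ι : Type*} {P : Set E} {h : E → ℝ} {g : ι → E → ℝ} {s c : ι → ℝ}

def EpigraphHalfspaceRep (P : Set E) (h : E → ℝ) (g : ι → E → ℝ) (s c : ι → ℝ) : Prop :=
  ∀ x t, (x ∈ P ∧ h x ≤ t) ↔ ∀ k, g k x + s k * t ≤ c k

namespace EpigraphHalfspaceRep

lemma coeff_nonpos (hrep : EpigraphHalfspaceRep P h g s c) {x₀ : E} (hx₀ : x₀ ∈ P) (k : ι) :
    s k ≤ 0 :=
  nonpos_of_forall_ge_mul_le (t₀ := h x₀) (M := c k - g k x₀) fun t ht => by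
    linarith [(hrep x₀ t).1 ⟨hx₀, ht⟩ k]

lemma exists_coeff_neg (hrep : EpigraphHalfspaceRep P h g s c) {x₀ : E} (hx₀ : x₀ ∈ P) :
    ∃ k, s k < 0 := by
  by_contra! hnonneg
  have hzero : ∀ k, s k = 0 := fun k => le_antisymm (hrep.coeff_nonpos hx₀ k) (hnonneg k)
  have hbelow := (hrep x₀ (h x₀ - 1)).2 fun k => by
    simpa [hzero k] using (hrep x₀ (h x₀)).1 ⟨hx₀, le_rfl⟩ k
  linarith [hbelow.2]

lemma eq_ciSup [Finite ι] (hrep : EpigraphHalfspaceRep P h g s c) {x : E} (hx : x ∈ P) :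
    h x = ⨆ k : {k // s k < 0}, (c k - g k x) / s k := by
  have : Nonempty {k // s k < 0} := nonempty_subtype.2 (hrep.exists_coeff_neg hx)
  have hgraph := (hrep x (h x)).1 ⟨hx, le_rfl⟩
  refine le_antisymm ((hrep x _).2 fun k => ?_).2 (ciSup_le fun k => ?_)
  · rcases (hrep.coeff_nonpos hx k).lt_or_eq with hk | hk
    · have hle := le_ciSup (Finite.bddAbove_range fun k : {k // s k < 0} =>
        (c k - g k x) / s k) ⟨k, hk⟩
      rw [div_le_iff_of_neg hk] at hle
      linarith
    · simpa [hk] using hgraph k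
  · rw [div_le_iff_of_neg k.2]
    linarith [hgraph k]

end EpigraphHalfspaceRep

end

lemma slope_nonpos_of_le_of_antitoneOn {n : ℕ} {P : Set (Fin n → ℝ)} {h : (Fin n → ℝ) → ℝ}
    {x₀ : Fin n → ℝ} (hx₀ : x₀ ∈ P) (hPrec : P + Set.Ici 0 ⊆ P) (hmono : AntitoneOn h P)
    {a : Fin n → ℝ} {d : ℝ} (hle : ∀ x ∈ P, ∑ i, a i * x i + d ≤ h x) (i : Fin n) : a i ≤ 0 := by
  refine nonpos_of_forall_ge_mul_le (t₀ := 0) (M := h x₀ - (∑ j, a j * x₀ j + d)) fun μ hμ => ?_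
  have hray : x₀ ≤ x₀ + Pi.single i μ := le_add_of_nonneg_right (Pi.single_nonneg.2 hμ)
  have hrayP : x₀ + Pi.single i μ ∈ P := hPrec (Set.add_mem_add hx₀ (Pi.single_nonneg.2 hμ))
  have hsum : ∑ j, a j * (x₀ + Pi.single i μ : Fin n → ℝ) j = ∑ j, a j * x₀ j + a i * μ := by
    simp [mul_add, Finset.sum_add_distrib, Pi.single_apply]
  linarith [hle _ hrayP, hmono hx₀ hrayP hray]

lemma exists_fin_of_eq_ciSup_ratAffine {n : ℕ} {ι : Type*} [Fintype ι] [Nonempty ι]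
    {P : Set (Fin n → ℝ)} {h : (Fin n → ℝ) → ℝ} (t : ι → Fin n → ℚ) (b : ι → ℚ)
    (ht : ∀ k i, t k i ≤ 0) (hmax : ∀ x ∈ P, h x = ⨆ k, ratAffine (t k) (b k) x) :
    ∃ (N : ℕ) (_ : 0 < N) (t : Fin N → Fin n → ℚ) (b : Fin N → ℚ),
      (∀ k i, t k i ≤ 0) ∧
      ∀ x ∈ P, h x = ⨆ k : Fin N, ((∑ i, (t k i : ℝ) * x i) + (b k : ℝ)) := by
  let e := Fintype.equivFin ι
  exact ⟨_, Fintype.card_pos, t ∘ e.symm, b ∘ e.symm, fun k => ht _,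
    fun x hx => (hmax x hx).trans (e.symm.iSup_comp (g := fun k => ratAffine (t k) (b k) x)).symm⟩

lemma epigraph_eq_inter_of_eq_ciSup {E ι : Type*} [Finite ι] [Nonempty ι] {P : Set E}
    {h : E → ℝ} {f : ι → E → ℝ} (hmax : ∀ x ∈ P, h x = ⨆ k, f k x) :
    {p : E × ℝ | p.1 ∈ P ∧ h p.1 ≤ p.2} = Prod.fst ⁻¹' P ∩ {p | ∀ k, f k p.1 ≤ p.2} := by
  ext ⟨x, t⟩
  simp only [Set.mem_ofPred_eq, Set.mem_inter_iff, Set.mem_preimage]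
  refine and_congr_right fun hx => ?_
  rw [hmax x hx, ciSup_le_iff (Finite.bddAbove_range _)]

lemma IsRatHPolyhedron.preimage_fst {n : ℕ} {P : Set (Fin n → ℝ)} (hP : IsRatHPolyhedron n P) :
    IsRatHPolyhedronProd n (Prod.fst ⁻¹' P) := by
  obtain ⟨N, a, b, rfl⟩ := hP
  refine ⟨N, a, 0, b, ?_⟩
  ext p
  simp

namespace IsRatHPolyhedronProd

lemma of_fintype {n : ℕ} {ι : Type*} [Fintype ι] (a : ι → Fin n → ℚ) (s b : ι → ℚ) :
    IsRatHPolyhedronProd n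
      (⋂ k, {p | (∑ i, (a k i : ℝ) * p.1 i) + (s k : ℝ) * p.2 ≤ (b k : ℝ)}) := by
  let e := Fintype.equivFin ι
  exact ⟨_, a ∘ e.symm, s ∘ e.symm, b ∘ e.symm,
    (e.symm.iInf_comp (g := fun k => {p : (Fin n → ℝ) × ℝ |
      (∑ i, (a k i : ℝ) * p.1 i) + (s k : ℝ) * p.2 ≤ (b k : ℝ)})).symm⟩

lemma inter {n : ℕ} {S T : Set ((Fin n → ℝ) × ℝ)} (hS : IsRatHPolyhedronProd n S)
    (hT : IsRatHPolyhedronProd n T) : IsRatHPolyhedronProd n (S ∩ T) := by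
  obtain ⟨_, a₁, s₁, b₁, rfl⟩ := hS
  obtain ⟨_, a₂, s₂, b₂, rfl⟩ := hT
  convert of_fintype (Sum.elim a₁ a₂) (Sum.elim s₁ s₂) (Sum.elim b₁ b₂) using 1
  rw [Set.iInter_sum]
  rfl

lemma setOf_ratAffine_le {n N : ℕ} (t : Fin N → Fin n → ℚ) (b : Fin N → ℚ) :
    IsRatHPolyhedronProd n {p | ∀ k, ratAffine (t k) (b k) p.1 ≤ p.2} := by
  refine ⟨N, t, fun _ => -1, fun k => -b k, ?_⟩
  ext p
  simp only [ratAffine, Set.mem_ofPred_eq, Set.mem_iInter, Rat.cast_neg, Rat.cast_one]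
  exact forall_congr' fun k => by constructor <;> intro <;> linarith

end IsRatHPolyhedronProd

theorem epigraph_ratHPolyhedron_iff_maxAffine_decreasing_general (n : ℕ)
    (P : Set (Fin n → ℝ)) (hPne : P.Nonempty)
    (hPpoly : IsRatHPolyhedron n P)
    (hPrec : P + {q : Fin n → ℝ | ∀ i, 0 ≤ q i} ⊆ P)
    (h : (Fin n → ℝ) → ℝ)
    (hmono : ∀ x ∈ P, ∀ y ∈ P, (∀ i, x i ≤ y i) → h y ≤ h x) :
    IsRatHPolyhedronProd n {p : (Fin n → ℝ) × ℝ | p.1 ∈ P ∧ h p.1 ≤ p.2} ↔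
    ∃ (N : ℕ) (_ : 0 < N) (t : Fin N → Fin n → ℚ) (b : Fin N → ℚ),
      (∀ k i, t k i ≤ 0) ∧
      ∀ x ∈ P, h x = ⨆ k : Fin N, ((∑ i, (t k i : ℝ) * x i) + (b k : ℝ)) := by
  constructor
  · rintro ⟨N, a, s, b, hepi⟩
    obtain ⟨x₀, hx₀⟩ := hPne
    have hrep : EpigraphHalfspaceRep P h (fun k x => ∑ i, (a k i : ℝ) * x i)
        (fun k => (s k : ℝ)) (fun k => (b k : ℝ)) := fun x t => by
      simpa [Set.mem_iInter] using Set.ext_iff.1 hepi (x, t)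
    have : Nonempty {k // (s k : ℝ) < 0} := nonempty_subtype.2 (hrep.exists_coeff_neg hx₀)
    let t (k : {k // (s k : ℝ) < 0}) (i : Fin n) : ℚ := -a k i / s k
    let c (k : {k // (s k : ℝ) < 0}) : ℚ := b k / s k
    have hmax : ∀ x ∈ P, h x = ⨆ k, ratAffine (t k) (c k) x := fun x hx => by
      simpa only [t, c, ratAffine_neg_div] using hrep.eq_ciSup hx
    refine exists_fin_of_eq_ciSup_ratAffine t c (fun k i => ?_) hmax
    have hle : ∀ x ∈ P, ratAffine (t k) (c k) x ≤ h x := fun x hx =>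
      (hmax x hx).symm ▸ le_ciSup (Finite.bddAbove_range fun k => ratAffine (t k) (c k) x) k
    exact_mod_cast slope_nonpos_of_le_of_antitoneOn hx₀ hPrec hmono hle i
  · rintro ⟨N, hN, t, b, -, hmax⟩
    have : Nonempty (Fin N) := ⟨⟨0, hN⟩⟩
    rw [epigraph_eq_inter_of_eq_ciSup (f := fun k => ratAffine (t k) (b k)) hmax]
    exact hPpoly.preimage_fst.inter (.setOf_ratAffine_le t b)

/-- For a nonempty rational H-polyhedron `P ⊆ ℝⁿ_{≥0}` with
`P + ℝⁿ_{≥0} ⊆ P` and `h` convex on `P` and decreasing in each variable on `P`,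
the epigraph of `h` (over `P`) is a rational H-polyhedron iff `h` is, on `P`, a
finite maximum of rational affine functions with nonpositive slopes. -/
theorem epigraph_ratHPolyhedron_iff_maxAffine_decreasing (n : ℕ) (hn : 0 < n)
    (P : Set (Fin n → ℝ)) (hPne : P.Nonempty)
    (hPsub : P ⊆ {x : Fin n → ℝ | ∀ i, 0 ≤ x i})
    (hPpoly : IsRatHPolyhedron n P)
    (hPrec : P + {q : Fin n → ℝ | ∀ i, 0 ≤ q i} ⊆ P)
    (h : (Fin n → ℝ) → ℝ)
    (hconv : ConvexOn ℝ P h)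
    (hmono : ∀ x ∈ P, ∀ y ∈ P, (∀ i, x i ≤ y i) → h y ≤ h x) :
    IsRatHPolyhedronProd n {p : (Fin n → ℝ) × ℝ | p.1 ∈ P ∧ h p.1 ≤ p.2} ↔
    ∃ (N : ℕ) (_ : 0 < N) (t : Fin N → Fin n → ℚ) (b : Fin N → ℚ),
      (∀ k i, t k i ≤ 0) ∧
      ∀ x ∈ P, h x = ⨆ k : Fin N, ((∑ i, (t k i : ℝ) * x i) + (b k : ℝ)) :=
  epigraph_ratHPolyhedron_iff_maxAffine_decreasing_general n P hPne hPpoly hPrec h hmono
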